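/- Let ψ, φ : ℝ² → ℂ be differentiable (as functions of (x,y)) and p : ℝ² → ℝ, and suppose ∂_z ψ = p·φ and ∂_z̄ φ = −p·ψ, where ∂_z f := (1/2)(∂f/∂x − i·∂f/∂y) and ∂_z̄ f := (1/2)(∂f/∂x + i·∂f/∂y). Then the following three identities hold everywhere, expressing that the 1-forms of the generalized Weierstrass representation are closed: (i) ∂_z̄(conj(ψ)²) + ∂_z(conj(φ)²) = 0; (ii) ∂_z̄(φ²) + ∂_z(ψ²) = 0; (iii) ∂_z̄(φ·conj(ψ)) = ∂_z(ψ·conj(φ)). -/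

import Mathlib

/-- Partial derivative in the first variable of a function on `ℝ²`. -/
noncomputable def pderivX (f : ℝ × ℝ → ℂ) (q : ℝ × ℝ) : ℂ :=
  deriv (fun x : ℝ => f (x, q.2)) q.1

/-- Partial derivative in the second variable of a function on `ℝ²`. -/
noncomputable def pderivY (f : ℝ × ℝ → ℂ) (q : ℝ × ℝ) : ℂ :=
  deriv (fun y : ℝ => f (q.1, y)) q.2

/-- `∂_z f := (1/2)(∂f/∂x − i·∂f/∂y)`. -/
noncomputable def dz (f : ℝ × ℝ → ℂ) (q : ℝ × ℝ) : ℂ :=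
  (1 / 2 : ℂ) * (pderivX f q - Complex.I * pderivY f q)

/-- `∂_z̄ f := (1/2)(∂f/∂x + i·∂f/∂y)`. -/
noncomputable def dzbar (f : ℝ × ℝ → ℂ) (q : ℝ × ℝ) : ℂ :=
  (1 / 2 : ℂ) * (pderivX f q + Complex.I * pderivY f q)

/-!
Conjugation exchanges `∂_z` and `∂_z̄`, and both operators obey the Leibniz rule. Expanding each
identity with these rules and substituting the Dirac equation, the terms cancel in pairs; for (iii)
this uses that `p` is real, so that `conj (p φ) = p conj φ`.
-/

section WirtingerCalculus

variable {f g : ℝ × ℝ → ℂ} {q : ℝ × ℝ}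

lemma DifferentiableAt.sliceX (hf : DifferentiableAt ℝ f q) :
    DifferentiableAt ℝ (fun x : ℝ => f (x, q.2)) q.1 :=
  hf.comp q.1 (by fun_prop)

lemma DifferentiableAt.sliceY (hf : DifferentiableAt ℝ f q) :
    DifferentiableAt ℝ (fun y : ℝ => f (q.1, y)) q.2 :=
  hf.comp q.2 (by fun_prop)

lemma pderivX_mul (hf : DifferentiableAt ℝ f q) (hg : DifferentiableAt ℝ g q) :
    pderivX (fun q' => f q' * g q') q = pderivX f q * g q + f q * pderivX g q :=
  deriv_mul hf.sliceX hg.sliceX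

lemma pderivY_mul (hf : DifferentiableAt ℝ f q) (hg : DifferentiableAt ℝ g q) :
    pderivY (fun q' => f q' * g q') q = pderivY f q * g q + f q * pderivY g q :=
  deriv_mul hf.sliceY hg.sliceY

lemma pderivX_conj (hf : DifferentiableAt ℝ f q) :
    pderivX (fun q' => starRingEnd ℂ (f q')) q = starRingEnd ℂ (pderivX f q) :=
  hf.sliceX.hasDerivAt.star.deriv

lemma pderivY_conj (hf : DifferentiableAt ℝ f q) :
    pderivY (fun q' => starRingEnd ℂ (f q')) q = starRingEnd ℂ (pderivY f q) :=
  hf.sliceY.hasDerivAt.star.deriv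

lemma dz_mul (hf : DifferentiableAt ℝ f q) (hg : DifferentiableAt ℝ g q) :
    dz (fun q' => f q' * g q') q = dz f q * g q + f q * dz g q := by
  rw [dz, dz, dz, pderivX_mul hf hg, pderivY_mul hf hg]
  ring

lemma dzbar_mul (hf : DifferentiableAt ℝ f q) (hg : DifferentiableAt ℝ g q) :
    dzbar (fun q' => f q' * g q') q = dzbar f q * g q + f q * dzbar g q := by
  rw [dzbar, dzbar, dzbar, pderivX_mul hf hg, pderivY_mul hf hg]
  ring

lemma dz_sq (hf : DifferentiableAt ℝ f q) :
    dz (fun q' => f q' ^ 2) q = 2 * f q * dz f q := by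
  simp only [sq, dz_mul hf hf]
  ring

lemma dzbar_sq (hf : DifferentiableAt ℝ f q) :
    dzbar (fun q' => f q' ^ 2) q = 2 * f q * dzbar f q := by
  simp only [sq, dzbar_mul hf hf]
  ring

lemma dz_conj (hf : DifferentiableAt ℝ f q) :
    dz (fun q' => starRingEnd ℂ (f q')) q = starRingEnd ℂ (dzbar f q) := by
  rw [dz, dzbar, pderivX_conj hf, pderivY_conj hf]
  simp only [map_mul, map_add, map_div₀, map_one, map_ofNat, Complex.conj_I]
  ring

lemma dzbar_conj (hf : DifferentiableAt ℝ f q) :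
    dzbar (fun q' => starRingEnd ℂ (f q')) q = starRingEnd ℂ (dz f q) := by
  rw [dz, dzbar, pderivX_conj hf, pderivY_conj hf]
  simp only [map_mul, map_sub, map_div₀, map_one, map_ofNat, Complex.conj_I]
  ring

end WirtingerCalculus

/-- If differentiable `ψ, φ : ℝ² → ℂ` solve the Dirac equation
`∂_z ψ = p·φ`, `∂_z̄ φ = −p·ψ` with real-valued `p`, then the three closedness identities of
the generalized Weierstrass representation hold:
(i) `∂_z̄(conj ψ²) + ∂_z(conj φ²) = 0`; (ii) `∂_z̄(φ²) + ∂_z(ψ²) = 0`;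
(iii) `∂_z̄(φ·conj ψ) = ∂_z(ψ·conj φ)`. -/
theorem weierstrass_representation_one_forms_closed
    (ψ φ : ℝ × ℝ → ℂ) (p : ℝ × ℝ → ℝ)
    (hψ : Differentiable ℝ ψ) (hφ : Differentiable ℝ φ)
    (h1 : ∀ q : ℝ × ℝ, dz ψ q = (p q : ℂ) * φ q)
    (h2 : ∀ q : ℝ × ℝ, dzbar φ q = -((p q : ℂ) * ψ q)) :
    ∀ q : ℝ × ℝ,
      (dzbar (fun q' => (starRingEnd ℂ (ψ q')) ^ 2) q
        + dz (fun q' => (starRingEnd ℂ (φ q')) ^ 2) q = 0)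
      ∧ (dzbar (fun q' => (φ q') ^ 2) q + dz (fun q' => (ψ q') ^ 2) q = 0)
      ∧ (dzbar (fun q' => φ q' * starRingEnd ℂ (ψ q')) q
        = dz (fun q' => ψ q' * starRingEnd ℂ (φ q')) q) := by
  intro q
  have hψc : DifferentiableAt ℝ (fun q' => starRingEnd ℂ (ψ q')) q := (hψ q).star
  have hφc : DifferentiableAt ℝ (fun q' => starRingEnd ℂ (φ q')) q := (hφ q).star
  refine ⟨?_, ?_, ?_⟩
  · rw [dzbar_sq hψc, dz_sq hφc, dzbar_conj (hψ q), dz_conj (hφ q), h1, h2]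
    simp only [map_mul, map_neg, Complex.conj_ofReal]
    ring
  · rw [dzbar_sq (hφ q), dz_sq (hψ q), h1, h2]
    ring
  · rw [dzbar_mul (hφ q) hψc, dz_mul (hψ q) hφc, dzbar_conj (hψ q), dz_conj (hφ q), h1, h2]
    simp only [map_mul, map_neg, Complex.conj_ofReal]
    ring
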